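/- (Remark 2.4.) Let Λ be a metric space, λ₀ ∈ Λ, and F : C([a,b],E) × Λ → C([a,b],E) be such that F(·,λ) is a Volterra operator for each λ. Assume that there is a neighborhood U₀ of λ₀ on which the family {F(·,λ)}_{λ∈U₀} is uniformly locally contracting with constant q < 1, and that F is continuous at (y,λ₀) for every y ∈ C([a,b],E). Suppose that at λ = λ₀ the equation y = F(y,λ₀) has a maximally extended solution on [a,a+ζ), and that there is a sequence λᵢ ∈ U₀ with λᵢ → λ₀ such that for each i the equation y = F(y,λᵢ) has a maximally extended solution on [a,a+ζᵢ). Then β := min{ζ, inf_i ζᵢ} > 0, and either β = ζ or β = ζ_{i₀} for some index i₀. -/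
import Mathlib

set_option linter.unusedSectionVars false
set_option linter.unusedVariables false
set_option maxHeartbeats 4000000


open Set Filter Topology

noncomputable section

variable {E : Type*} [NormedAddCommGroup E] [NormedSpace ℝ E] [CompleteSpace E]

/-- The partial sup-norm `‖y‖_ξ = sup_{t ∈ [a, a+ξ]} ‖y t‖` on `C([a,b], E)`. -/
def partNorm (a b ξ : ℝ) (y : C(Set.Icc a b, E)) : ℝ :=
  sSup ((fun t : Set.Icc a b => ‖y t‖) '' {t : Set.Icc a b | (t : ℝ) ≤ a + ξ})

/-- `y₁` and `y₂` agree on `[a, a+ξ]`. -/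
def eqUpTo (a b ξ : ℝ) (y₁ y₂ : C(Set.Icc a b, E)) : Prop :=
  ∀ t : Set.Icc a b, (t : ℝ) ≤ a + ξ → y₁ t = y₂ t

/-- A Volterra operator on `C([a,b], E)` (in the sense of Tikhonov). -/
def IsVolterra (a b : ℝ) (Ψ : C(Set.Icc a b, E) → C(Set.Icc a b, E)) : Prop :=
  ∀ ξ ∈ Set.Ioo (0:ℝ) (b - a), ∀ y₁ y₂ : C(Set.Icc a b, E),
    eqUpTo a b ξ y₁ y₂ → eqUpTo a b ξ (Ψ y₁) (Ψ y₂)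

/-- A locally contracting operator with contraction constant `q`. -/
def IsLocallyContracting (a b q : ℝ) (Ψ : C(Set.Icc a b, E) → C(Set.Icc a b, E)) : Prop :=
  ∀ r > (0:ℝ), ∃ δ > (0:ℝ), ∀ y₁ y₂ : C(Set.Icc a b, E),
    partNorm a b (b - a) y₁ ≤ r → partNorm a b (b - a) y₂ ≤ r →
      (partNorm a b δ (Ψ y₁ - Ψ y₂) ≤ q * partNorm a b δ (y₁ - y₂)) ∧
      (∀ γ ∈ Set.Ioc (0:ℝ) (b - a - δ), eqUpTo a b γ y₁ y₂ →
        partNorm a b (γ + δ) (Ψ y₁ - Ψ y₂) ≤ q * partNorm a b (γ + δ) (y₁ - y₂))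

/-- A local solution of `y = Ψ y` on `[a, a+γ]`: a function continuous on `[a, a+γ]`
admitting a continuous extension `y ∈ C([a,b], E)` with `(Ψ y) t = g t` on `[a, a+γ]`. -/
def IsLocalSolution (a b γ : ℝ) (Ψ : C(Set.Icc a b, E) → C(Set.Icc a b, E))
    (g : ℝ → E) : Prop :=
  0 < γ ∧ γ ≤ b - a ∧ ContinuousOn g (Set.Icc a (a + γ)) ∧
  ∃ y : C(Set.Icc a b, E),
    (∀ t : Set.Icc a b, (t : ℝ) ≤ a + γ → y t = g t) ∧
    (∀ t : Set.Icc a b, (t : ℝ) ≤ a + γ → Ψ y t = g t)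

/-- A maximally extended solution of `y = Ψ y` on `[a, a+ζ)`. -/
def IsMaxExtSolution (a b ζ : ℝ) (Ψ : C(Set.Icc a b, E) → C(Set.Icc a b, E))
    (g : ℝ → E) : Prop :=
  0 < ζ ∧ ζ ≤ b - a ∧ (∀ γ ∈ Set.Ioo (0:ℝ) ζ, IsLocalSolution a b γ Ψ g) ∧
  Tendsto (fun γ => sSup ((fun t => ‖g t‖) '' Set.Icc a (a + γ))) (𝓝[<] ζ) atTop

/-- A family of Volterra operators, uniformly locally contracting on `Λ₀` with constant `q`. -/
def IsUniformlyLocallyContracting {Λ : Type*} (a b q : ℝ) (Λ₀ : Set Λ)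
    (F : C(Set.Icc a b, E) → Λ → C(Set.Icc a b, E)) : Prop :=
  ∀ r > (0:ℝ), ∃ δ > (0:ℝ), ∀ lam ∈ Λ₀, ∀ y₁ y₂ : C(Set.Icc a b, E),
    partNorm a b (b - a) y₁ ≤ r → partNorm a b (b - a) y₂ ≤ r →
      (partNorm a b δ (F y₁ lam - F y₂ lam) ≤ q * partNorm a b δ (y₁ - y₂)) ∧
      (∀ γ ∈ Set.Ioc (0:ℝ) (b - a - δ), eqUpTo a b γ y₁ y₂ →
        partNorm a b (γ + δ) (F y₁ lam - F y₂ lam) ≤ q * partNorm a b (γ + δ) (y₁ - y₂))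

section Helpers

variable {a b : ℝ}

lemma partNorm_nonneg (ξ : ℝ) (y : C(Icc a b, E)) : 0 ≤ partNorm a b ξ y := by
  apply Real.sSup_nonneg
  rintro x ⟨t, -, rfl⟩
  exact norm_nonneg _

lemma partNorm_le (ξ : ℝ) {y : C(Icc a b, E)} {c : ℝ} (hc : 0 ≤ c)
    (h : ∀ t : Icc a b, (t:ℝ) ≤ a + ξ → ‖y t‖ ≤ c) : partNorm a b ξ y ≤ c := by
  apply Real.sSup_le _ hc
  rintro x ⟨t, ht, rfl⟩
  exact h t ht

lemma le_partNorm (ξ : ℝ) (y : C(Icc a b, E)) (t : Icc a b) (ht : (t:ℝ) ≤ a + ξ) :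
    ‖y t‖ ≤ partNorm a b ξ y := by
  have hcpt : IsCompact {s : Icc a b | (s:ℝ) ≤ a + ξ} := by
    have hcl : IsClosed {s : Icc a b | (s:ℝ) ≤ a + ξ} :=
      isClosed_Iic.preimage continuous_subtype_val
    exact hcl.isCompact
  exact le_csSup (hcpt.image (y.continuous.norm)).bddAbove ⟨t, ht, rfl⟩

lemma partNorm_sat {ξ : ℝ} (h : b - a ≤ ξ) (y : C(Icc a b, E)) :
    partNorm a b ξ y = partNorm a b (b - a) y := by
  have hset : ∀ ξ' : ℝ, b - a ≤ ξ' → {t : Icc a b | (t:ℝ) ≤ a + ξ'} = univ := by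
    intro ξ' hξ'
    ext t
    simp only [mem_setOf_eq, mem_univ, iff_true]
    have := t.2.2
    linarith
  unfold partNorm
  rw [hset ξ h, hset (b - a) le_rfl]

lemma contraction_combined (hab : a < b) {q δ : ℝ} (hδ : 0 < δ)
    {Fy₁ Fy₂ y₁ y₂ : C(Icc a b, E)}
    (H1 : partNorm a b δ (Fy₁ - Fy₂) ≤ q * partNorm a b δ (y₁ - y₂))
    (H2 : ∀ γ ∈ Ioc (0:ℝ) (b - a - δ), eqUpTo a b γ y₁ y₂ →
      partNorm a b (γ + δ) (Fy₁ - Fy₂) ≤ q * partNorm a b (γ + δ) (y₁ - y₂))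
    {σ : ℝ} (hσ : 0 ≤ σ) (heq : 0 < σ → eqUpTo a b σ y₁ y₂) :
    partNorm a b (σ + δ) (Fy₁ - Fy₂) ≤ q * partNorm a b (σ + δ) (y₁ - y₂) := by
  rcases eq_or_lt_of_le hσ with h0 | hσpos
  · rw [← h0, zero_add]; exact H1
  · by_cases hcase : σ ≤ b - a - δ
    · exact H2 σ ⟨hσpos, hcase⟩ (heq hσpos)
    · push_neg at hcase
      by_cases hba : 0 < b - a - δ
      · have heq' : eqUpTo a b (b - a - δ) y₁ y₂ :=
          fun t ht => heq hσpos t (ht.trans (by linarith))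
        have h2 := H2 (b - a - δ) ⟨hba, le_rfl⟩ heq'
        have he : b - a - δ + δ = b - a := by ring
        rw [he] at h2
        rw [partNorm_sat (by linarith) (Fy₁ - Fy₂), partNorm_sat (by linarith) (y₁ - y₂)]
        exact h2
      · push_neg at hba
        rw [partNorm_sat (by linarith) (Fy₁ - Fy₂), partNorm_sat (by linarith) (y₁ - y₂)]
        rw [partNorm_sat (by linarith : b - a ≤ δ) (Fy₁ - Fy₂),
            partNorm_sat (by linarith : b - a ≤ δ) (y₁ - y₂)] at H1
        exact H1

def clampMap (a b c : ℝ) (hac : a ≤ c) (f : ℝ → E) (hf : ContinuousOn f (Icc a c)) :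
    C(Icc a b, E) :=
  ⟨fun t => f (min (t:ℝ) c), by
    exact hf.comp_continuous ((continuous_subtype_val).min continuous_const)
      (fun t => ⟨le_min t.2.1 hac, min_le_right _ _⟩)⟩

@[simp] lemma clampMap_apply (a b c : ℝ) (hac : a ≤ c) (f : ℝ → E)
    (hf : ContinuousOn f (Icc a c)) (t : Icc a b) :
    clampMap a b c hac f hf t = f (min (t:ℝ) c) := rfl

end Helpers

/-- Remark 2.4: if `y = F(y,λ₀)` has a maximally extended solution on `[a,a+ζ)` and, along a
sequence `λᵢ → λ₀`, `y = F(y,λᵢ)` has maximally extended solutions on `[a,a+ζᵢ)`, then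
`β := min{ζ, inf_i ζᵢ} > 0` and either `β = ζ` or `β = ζ_{i₀}` for some `i₀`. -/


theorem maxExt_lengths_min_attained
    {Λ : Type*} [MetricSpace Λ] (lam₀ : Λ)
    (a b q : ℝ) (hab : a < b) (hq : q < 1)
    (F : C(Set.Icc a b, E) → Λ → C(Set.Icc a b, E))
    (hVol : ∀ lam : Λ, IsVolterra a b (fun y => F y lam))
    (U₀ : Set Λ) (hU₀ : U₀ ∈ 𝓝 lam₀)
    (hULC : IsUniformlyLocallyContracting a b q U₀ F)
    (hcont : ∀ y : C(Set.Icc a b, E),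
      ContinuousAt (fun p : C(Set.Icc a b, E) × Λ => F p.1 p.2) (y, lam₀))
    (ζ : ℝ) (y₀ : ℝ → E) (hy₀ : IsMaxExtSolution a b ζ (fun y => F y lam₀) y₀)
    (lams : ℕ → Λ) (hmem : ∀ i, lams i ∈ U₀) (hlim : Tendsto lams atTop (𝓝 lam₀))
    (ζs : ℕ → ℝ) (sols : ℕ → ℝ → E)
    (hsols : ∀ i, IsMaxExtSolution a b (ζs i) (fun y => F y (lams i)) (sols i)) :
    0 < min ζ (⨅ i, ζs i) ∧
      (min ζ (⨅ i, ζs i) = ζ ∨ ∃ i₀, min ζ (⨅ i, ζs i) = ζs i₀) := by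
  have hζpos : 0 < ζ := hy₀.1
  have hζba : ζ ≤ b - a := hy₀.2.1
  have hbddS : BddBelow (range ζs) := ⟨0, by rintro x ⟨i, rfl⟩; exact (hsols i).1.le⟩
  -- The key lemma: for every γ < ζ, eventually ζs i > γ.
  have keyB : ∀ γ : ℝ, 0 < γ → γ < ζ → ∀ᶠ i in atTop, γ < ζs i := by
    intro γ hγ0 hγζ
    have hγba : γ < b - a := lt_of_lt_of_le hγζ hζba
    set γ₀ := (γ + ζ)/2 with hγ₀def
    have hγγ₀ : γ < γ₀ := by rw [hγ₀def]; linarith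
    have hγ₀ζ : γ₀ < ζ := by rw [hγ₀def]; linarith
    have hγ₀pos : 0 < γ₀ := by linarith
    obtain ⟨-, -, hy₀cont, Y, hYy₀, hFY⟩ := hy₀.2.2.1 γ₀ ⟨hγ₀pos, hγ₀ζ⟩
    set R := ‖Y‖ with hRdef
    have hR0 : 0 ≤ R := norm_nonneg _
    obtain ⟨δ, hδ0, hδprop⟩ := hULC (R + 1) (by linarith)
    set q' := max q 0 with hq'def
    have hq'0 : 0 ≤ q' := le_max_right _ _
    have hq'1 : q' < 1 := max_lt hq one_pos
    set w : ℕ → ℝ → E := fun i t => sols i t - y₀ t with hwdef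
    set d : ℕ → ℝ → ℝ := fun i s => sSup ((fun t => ‖w i t‖) '' Icc a (a + s)) with hddef
    have hd0 : ∀ i s, 0 ≤ d i s := by
      intro i s
      apply Real.sSup_nonneg
      rintro x ⟨t, -, rfl⟩
      exact norm_nonneg _
    have hd_le : ∀ i s (c : ℝ), 0 ≤ c → (∀ t ∈ Icc a (a+s), ‖w i t‖ ≤ c) → d i s ≤ c := by
      intro i s c hc h
      exact Real.sSup_le (by rintro x ⟨t, ht, rfl⟩; exact h t ht) hc
    have hucont : ∀ i s, 0 < s → s < ζs i → ContinuousOn (sols i) (Icc a (a+s)) :=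
      fun i s h1 h2 => ((hsols i).2.2.1 s ⟨h1, h2⟩).2.2.1
    have hwcont : ∀ i s, 0 < s → s < ζs i → s ≤ γ → ContinuousOn (w i) (Icc a (a+s)) := by
      intro i s h1 h2 h3
      exact (hucont i s h1 h2).sub (hy₀cont.mono (Icc_subset_Icc le_rfl (by linarith)))
    have hle_d : ∀ i s, 0 < s → s < ζs i → s ≤ γ → ∀ t ∈ Icc a (a+s), ‖w i t‖ ≤ d i s := by
      intro i s h1 h2 h3 t ht
      exact le_csSup ((isCompact_Icc.image_of_continuousOn
        (hwcont i s h1 h2 h3).norm).bddAbove) ⟨t, ht, rfl⟩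
    -- the core contraction estimate
    have coreP : ∀ (r' δ' : ℝ), 0 < δ' →
        (∀ lam ∈ U₀, ∀ y₁ y₂ : C(Icc a b, E), partNorm a b (b-a) y₁ ≤ r' →
          partNorm a b (b-a) y₂ ≤ r' →
          (partNorm a b δ' (F y₁ lam - F y₂ lam) ≤ q * partNorm a b δ' (y₁ - y₂)) ∧
          (∀ γ'' ∈ Ioc (0:ℝ) (b-a-δ'), eqUpTo a b γ'' y₁ y₂ →
            partNorm a b (γ''+δ') (F y₁ lam - F y₂ lam) ≤ q * partNorm a b (γ''+δ') (y₁ - y₂))) →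
        ∀ (i : ℕ) (s σ ρ τC : ℝ), 0 ≤ σ → σ < s → s ≤ σ + δ' → s ≤ γ → s < ζs i →
        0 ≤ ρ → 0 ≤ τC →
        ∀ y₂ : C(Icc a b, E),
        (0 < σ → ∀ t : Icc a b, (t:ℝ) ≤ a + σ → y₂ t = sols i t) →
        (∀ t : Icc a b, ‖y₂ t - Y t‖ ≤ ρ) →
        (∀ t : Icc a b, (t:ℝ) ≤ a + γ → ‖F y₂ (lams i) t - y₀ t‖ ≤ τC) →
        d i s + ρ + R ≤ r' →
        d i s ≤ q' * (d i s + ρ) + τC := by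
      intro r' δ' hδ'0 hprop i s σ ρ τC hσ0 hσs hsδ hsγ hsζ hρ0 hτ0 y₂ hy₂u hy₂Y hy₂τ hbound
      have hs0 : 0 < s := lt_of_le_of_lt hσ0 hσs
      have hwc : ContinuousOn (w i) (Icc a (a+s)) := hwcont i s hs0 hsζ hsγ
      have haas : a ≤ a + s := by linarith
      set y₁ : C(Icc a b, E) := Y + clampMap a b (a+s) haas (w i) hwc with hy₁def
      have hy₁app : ∀ t : Icc a b, y₁ t = Y t + w i (min (t:ℝ) (a+s)) := fun t => rfl
      have hclamp_le : ∀ t : Icc a b, ‖w i (min (t:ℝ) (a+s))‖ ≤ d i s :=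
        fun t => hle_d i s hs0 hsζ hsγ _ ⟨le_min t.2.1 haas, min_le_right _ _⟩
      have hy₁u : ∀ t : Icc a b, (t:ℝ) ≤ a + s → y₁ t = sols i t := by
        intro t ht
        rw [hy₁app, min_eq_left ht, hYy₀ t (by linarith)]
        simp [hwdef]
      obtain ⟨-, -, -, Z, hZ1, hZ2⟩ := (hsols i).2.2.1 s ⟨hs0, hsζ⟩
      have heqZ : eqUpTo a b s Z y₁ := fun t ht => by rw [hZ1 t ht, hy₁u t ht]
      have hfix : ∀ t : Icc a b, (t:ℝ) ≤ a + s → F y₁ (lams i) t = sols i t := by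
        intro t ht
        have hv := hVol (lams i) s ⟨hs0, by linarith⟩ Z y₁ heqZ t ht
        exact hv.symm.trans (hZ2 t ht)
      have hr'0 : (0:ℝ) ≤ r' := by linarith [hd0 i s]
      have hpn₁ : partNorm a b (b-a) y₁ ≤ r' := by
        apply partNorm_le _ hr'0
        intro t _
        rw [hy₁app]
        calc ‖Y t + w i (min (t:ℝ) (a+s))‖ ≤ ‖Y t‖ + ‖w i (min (t:ℝ) (a+s))‖ := norm_add_le _ _
        _ ≤ R + d i s := add_le_add (Y.norm_coe_le_norm t) (hclamp_le t)
        _ ≤ r' := by linarith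
      have hpn₂ : partNorm a b (b-a) y₂ ≤ r' := by
        apply partNorm_le _ hr'0
        intro t _
        have h1 : ‖y₂ t‖ ≤ ‖Y t‖ + ‖y₂ t - Y t‖ := by
          have := norm_add_le (Y t) (y₂ t - Y t)
          simpa using this
        calc ‖y₂ t‖ ≤ ‖Y t‖ + ‖y₂ t - Y t‖ := h1
        _ ≤ R + ρ := add_le_add (Y.norm_coe_le_norm t) (hy₂Y t)
        _ ≤ r' := by linarith [hd0 i s]
      have hQ := hprop (lams i) (hmem i) y₁ y₂ hpn₁ hpn₂
      have heq12 : 0 < σ → eqUpTo a b σ y₁ y₂ := by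
        intro hσpos t ht
        rw [hy₁u t (by linarith), hy₂u hσpos t ht]
      have hcc := contraction_combined hab hδ'0 hQ.1 hQ.2 hσ0 heq12
      have hpn12 : partNorm a b (σ+δ') (y₁ - y₂) ≤ d i s + ρ := by
        apply partNorm_le _ (by linarith [hd0 i s])
        intro t _
        have he : (y₁ - y₂) t = w i (min (t:ℝ) (a+s)) - (y₂ t - Y t) := by
          rw [ContinuousMap.sub_apply, hy₁app]
          abel
        rw [he]
        exact (norm_sub_le _ _).trans (add_le_add (hclamp_le t) (hy₂Y t))
      have hchain : partNorm a b (σ+δ') (F y₁ (lams i) - F y₂ (lams i)) ≤ q' * (d i s + ρ) := by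
        calc partNorm a b (σ+δ') (F y₁ (lams i) - F y₂ (lams i))
            ≤ q * partNorm a b (σ+δ') (y₁ - y₂) := hcc
        _ ≤ q' * partNorm a b (σ+δ') (y₁ - y₂) :=
            mul_le_mul_of_nonneg_right (le_max_left _ _) (partNorm_nonneg _ _)
        _ ≤ q' * (d i s + ρ) := mul_le_mul_of_nonneg_left hpn12 hq'0
      have hrhs0 : 0 ≤ q' * (d i s + ρ) + τC :=
        add_nonneg (mul_nonneg hq'0 (by linarith [hd0 i s])) hτ0
      apply hd_le i s _ hrhs0
      intro t ht
      have htb : t ≤ b := by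
        have := ht.2
        linarith
      set t' : Icc a b := ⟨t, ht.1, htb⟩ with ht'def
      have ht's : (t':ℝ) ≤ a + s := ht.2
      have hsplit : w i t = (F y₁ (lams i) t' - F y₂ (lams i) t') + (F y₂ (lams i) t' - y₀ t) := by
        rw [hfix t' ht's]
        simp only [hwdef]
        abel
      rw [hsplit]
      calc ‖(F y₁ (lams i) t' - F y₂ (lams i) t') + (F y₂ (lams i) t' - y₀ t)‖
          ≤ ‖F y₁ (lams i) t' - F y₂ (lams i) t'‖ + ‖F y₂ (lams i) t' - y₀ t‖ := norm_add_le _ _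
      _ ≤ q' * (d i s + ρ) + τC := by
          apply add_le_add
          · have h1 := le_partNorm (σ+δ') (F y₁ (lams i) - F y₂ (lams i)) t'
              (by linarith : (t':ℝ) ≤ a + (σ+δ'))
            rw [ContinuousMap.sub_apply] at h1
            exact h1.trans hchain
          · exact hy₂τ t' (by linarith : (t':ℝ) ≤ a + γ)
    -- anchor estimate at the left endpoint
    have anchor : ∀ i, (1 - q') * ‖w i a‖ ≤ dist (F Y (lams i)) (F Y lam₀) := by
      intro i
      set εi := dist (F Y (lams i)) (F Y lam₀) with hεidef
      have hεi0 : 0 ≤ εi := dist_nonneg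
      set L := ‖w i a‖ with hLdef
      have hτY : ∀ t : Icc a b, (t:ℝ) ≤ a + γ → ‖F Y (lams i) t - y₀ t‖ ≤ εi := by
        intro t ht
        have he : F Y lam₀ t = y₀ t := hFY t (by linarith)
        rw [← he]
        calc ‖F Y (lams i) t - F Y lam₀ t‖ = dist (F Y (lams i) t) (F Y lam₀ t) :=
              (dist_eq_norm _ _).symm
        _ ≤ dist (F Y (lams i)) (F Y lam₀) := ContinuousMap.dist_apply_le_dist t
      have key : ∀ ν : ℝ, 0 < ν → (1-q') * L ≤ εi + q' * ν := by
        intro ν hν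
        have hζi : 0 < ζs i := (hsols i).1
        set s₀ := min (ζs i / 2) γ with hs₀def
        have hs₀0 : 0 < s₀ := lt_min (by linarith) hγ0
        have hs₀ζ : s₀ < ζs i := lt_of_le_of_lt (min_le_left _ _) (by linarith)
        have hs₀γ : s₀ ≤ γ := min_le_right _ _
        have hwc₀ := hwcont i s₀ hs₀0 hs₀ζ hs₀γ
        have hmem_a : a ∈ Icc a (a + s₀) := ⟨le_rfl, by linarith⟩
        have hcwa : ContinuousWithinAt (fun t => ‖w i t‖) (Icc a (a+s₀)) a :=
          (hwc₀.norm) a hmem_a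
        obtain ⟨ε, hε0, hball⟩ := Metric.mem_nhdsWithin_iff.mp
          (hcwa (Iio_mem_nhds (by linarith : ‖w i a‖ < L + ν)))
        set s := min (ε/2) s₀ with hsdef
        have hs0 : 0 < s := lt_min (by linarith) hs₀0
        have hsγ : s ≤ γ := (min_le_right _ _).trans hs₀γ
        have hsζ : s < ζs i := lt_of_le_of_lt (min_le_right _ _) hs₀ζ
        have hsmall : ∀ t ∈ Icc a (a+s), ‖w i t‖ < L + ν := by
          intro t ht
          apply hball
          constructor
          · rw [Metric.mem_ball, Real.dist_eq]
            have h1 : |t - a| ≤ s := by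
              rw [abs_le]
              constructor
              · linarith [ht.1]
              · linarith [ht.2]
            have h2 : s < ε := lt_of_le_of_lt (min_le_left _ _) (by linarith)
            linarith
          · exact ⟨ht.1, by
              have h3 := ht.2
              have h4 : s ≤ s₀ := min_le_right _ _
              linarith⟩
        have hL0 : 0 ≤ L := norm_nonneg _
        obtain ⟨δ', hδ'0, hprop'⟩ := hULC (R + (L + ν) + 1) (by linarith)
        set s' := min s δ' with hs'def
        have hs'0 : 0 < s' := lt_min hs0 hδ'0
        have hds' : d i s' ≤ L + ν := by
          apply hd_le i s' _ (by linarith)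
          intro t ht
          have : t ∈ Icc a (a+s) := ⟨ht.1, by
            have := ht.2
            have h4 : s' ≤ s := min_le_left _ _
            linarith⟩
          exact (hsmall t this).le
        have hcore := coreP (R+(L+ν)+1) δ' hδ'0 hprop' i s' 0 0 εi le_rfl hs'0
          (by simp only [zero_add]; exact min_le_right s δ')
          ((min_le_left _ _).trans hsγ)
          (lt_of_le_of_lt (min_le_left _ _) hsζ) le_rfl hεi0 Y
          (fun hc => absurd hc (lt_irrefl 0))
          (fun t => by simp)
          hτY
          (by linarith)
        have hLd : L ≤ d i s' := by
          have := hle_d i s' hs'0 (lt_of_le_of_lt (min_le_left _ _) hsζ)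
            ((min_le_left _ _).trans hsγ) a ⟨le_rfl, by linarith⟩
          exact this
        nlinarith [hd0 i s']
      apply le_of_forall_pos_le_add
      intro ν' hν'
      have h1 := key (ν'/(q'+1)) (by positivity)
      have h2 : q' * (ν'/(q'+1)) ≤ ν' := by
        rw [mul_comm, div_mul_eq_mul_div, div_le_iff₀ (by linarith : (0:ℝ) < q'+1)]
        nlinarith
      linarith
    have hFYtend : Tendsto (fun i => dist (F Y (lams i)) (F Y lam₀)) atTop (𝓝 0) := by
      have h1 : Tendsto (fun i => ((Y : C(Icc a b, E)), lams i)) atTop (𝓝 (Y, lam₀)) :=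
        Tendsto.prodMk_nhds tendsto_const_nhds hlim
      have h2 : Tendsto (fun i => F Y (lams i)) atTop (𝓝 (F Y lam₀)) :=
        ((hcont Y).tendsto).comp h1
      exact tendsto_iff_dist_tendsto_zero.mp h2
    have h1q : 0 < 1 - q' := by linarith
    have Pmain : ∀ (k : ℕ) (ε' : ℝ), 0 < ε' → ∀ᶠ i in atTop, ∀ s, 0 < s →
        s ≤ min ((k:ℝ)*δ) γ → s < ζs i → d i s ≤ ε' := by
      intro k
      induction k with
      | zero =>
        intro ε' hε'
        filter_upwards with i
        intro s hs0 hsle _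
        exfalso
        have h1 : s ≤ (0:ℝ) := by
          have := hsle.trans (min_le_left _ _)
          simpa using this
        linarith
      | succ k IH =>
        intro ε' hε'
        set C := min ε' (1/2) with hCdef
        have hC0 : 0 < C := lt_min hε' (by norm_num)
        have hCε : C ≤ ε' := min_le_left _ _
        have hC2 : C ≤ 1/2 := min_le_right _ _
        set θ := (1 - q') * C / 2 with hθdef
        have hθ0 : 0 < θ := by rw [hθdef]; nlinarith
        have hθC : θ < C := by rw [hθdef]; nlinarith
        obtain ⟨η, hη0, hηp⟩ := Metric.continuousAt_iff.mp (hcont Y) θ hθ0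
        have hev1 := IH (min (η/2) θ) (lt_min (by linarith) hθ0)
        have hev2 : ∀ᶠ i in atTop, dist (lams i) lam₀ < η := Metric.tendsto_nhds.mp hlim η hη0
        have hev3 : ∀ᶠ i in atTop, dist (F Y (lams i)) (F Y lam₀) < (1-q')*θ := by
          have hpos : (0:ℝ) < (1-q')*θ := by nlinarith
          exact hFYtend (Iio_mem_nhds hpos)
        have boot : ∀ (i : ℕ) (σ ρ₂ ρ₀ τC : ℝ) (y₂ : C(Icc a b, E)),
            0 ≤ σ → 0 ≤ ρ₂ → 0 ≤ ρ₀ → 0 ≤ τC → ρ₂ ≤ θ → ρ₀ ≤ θ → τC ≤ θ →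
            (0 < σ → ∀ t : Icc a b, (t:ℝ) ≤ a + σ → y₂ t = sols i t) →
            (∀ t : Icc a b, ‖y₂ t - Y t‖ ≤ ρ₂) →
            (∀ t : Icc a b, (t:ℝ) ≤ a + γ → ‖F y₂ (lams i) t - y₀ t‖ ≤ τC) →
            (∀ t ∈ Icc a (a + σ), ‖w i t‖ ≤ ρ₀) →
            ∀ s, σ < s → s ≤ σ + δ → s ≤ γ → s < ζs i → d i s ≤ (1 + q') * C / 2 := by
          intro i σ ρ₂ ρ₀ τC y₂ hσ0 hρ₂0 hρ₀0 hτC0 hρ₂θ hρ₀θ hτθ hy₂u hy₂Y hy₂τ hinit s hσs hsδ hsγ hsζ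
          have hs0 : 0 < s := lt_of_le_of_lt hσ0 hσs
          have hwc : ContinuousOn (w i) (Icc a (a+s)) := hwcont i s hs0 hsζ hsγ
          set wbar : ℝ → ℝ := fun t => ‖w i (max a (min t (a+s)))‖ with hwbardef
          have hwbarc : Continuous wbar := by
            apply (hwc.norm).comp_continuous
              (continuous_const.max (continuous_id.min continuous_const))
            intro x
            exact ⟨le_max_left _ _, max_le (by linarith) (min_le_right _ _)⟩
          have hwbar_eq : ∀ t ∈ Icc a (a+s), wbar t = ‖w i t‖ := by
            intro t ht
            show ‖w i (max a (min t (a+s)))‖ = ‖w i t‖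
            rw [min_eq_left ht.2, max_eq_right ht.1]
          have hstep : ∀ s', σ < s' → s' ≤ s → d i s' ≤ C → d i s' ≤ (1+q')*C/2 := by
            intro s' h1 h2 h3
            have hcore := coreP (R+1) δ hδ0 hδprop i s' σ ρ₂ τC hσ0 h1 (by linarith)
              (by linarith) (lt_of_le_of_lt h2 hsζ) hρ₂0 hτC0 y₂ hy₂u hy₂Y hy₂τ
              (by linarith [hθC, hC2])
            have hx : q' * ρ₂ ≤ q' * ((1-q')*C/2) := by
              apply mul_le_mul_of_nonneg_left _ hq'0
              rw [← hθdef]; exact hρ₂θ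
            have hy : τC ≤ (1-q')*C/2 := by rw [← hθdef]; exact hτθ
            nlinarith [hcore, hx, hy, h1q, hd0 i s', hq'0, hq'1, hC0]
          set T := Icc (a+σ) (a+s) ∩ wbar ⁻¹' (Ici C) with hTdef
          rcases T.eq_empty_or_nonempty with hTe | hTne
          · have hallC : ∀ t ∈ Icc a (a+s), ‖w i t‖ ≤ C := by
              intro t ht
              by_cases hcase : t ≤ a + σ
              · exact (hinit t ⟨ht.1, hcase⟩).trans (by linarith)
              · push_neg at hcase
                have htT : t ∉ T := by rw [hTe]; exact notMem_empty t
                have hnc : ¬ (C ≤ wbar t) := fun hc => htT ⟨⟨hcase.le, ht.2⟩, hc⟩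
                rw [hwbar_eq t ht] at hnc
                linarith
            exact hstep s hσs le_rfl (hd_le i s C hC0.le hallC)
          · exfalso
            have hTclosed : IsClosed T := isClosed_Icc.inter (isClosed_Ici.preimage hwbarc)
            have hTbdd : BddBelow T := BddBelow.mono inter_subset_left bddBelow_Icc
            have hTmem := hTclosed.csInf_mem hTne hTbdd
            set t₀ := sInf T with ht₀def
            obtain ⟨ht₀Icc, ht₀C⟩ := hTmem
            rw [mem_preimage, mem_Ici] at ht₀C
            have ht₀gt : a + σ < t₀ := by
              rcases eq_or_lt_of_le ht₀Icc.1 with he | h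
              · exfalso
                have hmem' : a + σ ∈ Icc a (a+s) := ⟨by linarith, by linarith⟩
                rw [← he, hwbar_eq _ hmem'] at ht₀C
                have := hinit (a+σ) ⟨by linarith, le_rfl⟩
                linarith
              · exact h
            have hltC : ∀ t ∈ Ico (a+σ) t₀, wbar t < C := by
              intro t ht
              by_contra hc
              push_neg at hc
              have hmemT : t ∈ T := ⟨⟨ht.1, by linarith [ht.2, ht₀Icc.2]⟩, hc⟩
              have := csInf_le hTbdd hmemT
              linarith [ht.2]
            have hwt₀ : wbar t₀ ≤ C := by
              have hcl : t₀ ∈ closure (Ico (a+σ) t₀) := by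
                rw [closure_Ico (ne_of_lt ht₀gt)]
                exact ⟨ht₀gt.le, le_rfl⟩
              have h1 : wbar t₀ ∈ closure (wbar '' Ico (a+σ) t₀) :=
                (hwbarc.continuousWithinAt).mem_closure_image hcl
              have h2 : wbar '' Ico (a+σ) t₀ ⊆ Iic C := by
                rintro x ⟨t, ht, rfl⟩
                exact (hltC t ht).le
              exact (closure_minimal h2 isClosed_Iic) h1
            set s' := t₀ - a with hs'def
            have has' : a + s' = t₀ := by rw [hs'def]; ring
            have hσs' : σ < s' := by rw [hs'def]; linarith
            have hs's : s' ≤ s := by rw [hs'def]; linarith [ht₀Icc.2]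
            have hds' : d i s' ≤ C := by
              apply hd_le i s' C hC0.le
              intro t ht
              rw [has'] at ht
              by_cases hcase : t ≤ a + σ
              · exact (hinit t ⟨ht.1, hcase⟩).trans (by linarith)
              · push_neg at hcase
                have htIcc : t ∈ Icc a (a+s) := ⟨ht.1, by linarith [ht.2, ht₀Icc.2]⟩
                rcases eq_or_lt_of_le ht.2 with he | hlt2
                · rw [← hwbar_eq t htIcc, he]
                  exact hwt₀
                · rw [← hwbar_eq t htIcc]
                  exact (hltC t ⟨hcase.le, hlt2⟩).le
            have himp := hstep s' hσs' hs's hds'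
            have ht₀mem : t₀ ∈ Icc a (a + s') := by
              rw [has']
              exact ⟨by linarith, le_rfl⟩
            have hle2 := hle_d i s' (by linarith) (lt_of_le_of_lt hs's hsζ)
              (le_trans hs's hsγ) t₀ ht₀mem
            have ht₀Icc2 : t₀ ∈ Icc a (a+s) := ⟨by linarith, ht₀Icc.2⟩
            rw [hwbar_eq t₀ ht₀Icc2] at ht₀C
            nlinarith [hC0, hq'1, h1q]
        filter_upwards [hev1, hev2, hev3] with i h1 h2 h3
        intro s hs0 hsle hsζ
        by_cases hcover : s ≤ min ((k:ℝ)*δ) γ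
        · exact (h1 s hs0 hcover hsζ).trans (le_trans (min_le_right _ _) (by linarith))
        · push_neg at hcover
          set σ := min ((k:ℝ)*δ) γ with hσdef
          have hσ0 : 0 ≤ σ := le_min (by positivity) hγ0.le
          have hsγ : s ≤ γ := hsle.trans (min_le_right _ _)
          have hsδσ : s ≤ σ + δ := by
            rcases le_total ((k:ℝ)*δ) γ with hcc | hcc
            · have he : σ = (k:ℝ)*δ := min_eq_left hcc
              have h5 : s ≤ ((k:ℝ)+1)*δ := by
                have h6 := hsle.trans (min_le_left _ _)
                push_cast at h6
                linarith
              rw [he]; linarith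
            · have he : σ = γ := min_eq_right hcc
              rw [he]; linarith
          have hbound1 : (1+q')*C/2 ≤ ε' := by nlinarith [hq'1, hC0, hCε]
          rcases eq_or_lt_of_le hσ0 with hσe | hσpos
          · have hanch : ‖w i a‖ ≤ θ := by
              have ha := anchor i
              nlinarith [norm_nonneg (w i a), h1q]
            have hτ : ∀ t : Icc a b, (t:ℝ) ≤ a + γ → ‖F Y (lams i) t - y₀ t‖ ≤ θ := by
              intro t ht
              have he : F Y lam₀ t = y₀ t := hFY t (by linarith)
              rw [← he]
              have h4 : dist (F Y (lams i)) (F Y lam₀) < θ := by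
                have hdp : dist ((Y : C(Set.Icc a b, E)), lams i) (Y, lam₀) < η := by
                  rw [Prod.dist_eq]
                  simp only [dist_self]
                  exact max_lt hη0 h2
                exact hηp hdp
              calc ‖F Y (lams i) t - F Y lam₀ t‖
                  = dist (F Y (lams i) t) (F Y lam₀ t) := (dist_eq_norm _ _).symm
              _ ≤ dist (F Y (lams i)) (F Y lam₀) := ContinuousMap.dist_apply_le_dist t
              _ ≤ θ := h4.le
            have hboot := boot i σ 0 θ θ Y hσ0 le_rfl hθ0.le hθ0.le hθ0.le le_rfl le_rfl
              (fun hc => absurd hc (by rw [← hσe]; exact lt_irrefl 0))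
              (fun t => by simp)
              hτ
              (fun t ht => by
                have hta : t = a := by
                  have h6 := ht.2
                  rw [← hσe] at h6
                  have h5 := ht.1
                  linarith
                rw [hta]
                exact hanch)
              s hcover hsδσ hsγ hsζ
            exact hboot.trans hbound1
          · have hσζ : σ < ζs i := lt_trans hcover hsζ
            have hσγ : σ ≤ γ := min_le_right _ _
            have hdσ : d i σ ≤ min (η/2) θ := h1 σ hσpos le_rfl hσζ
            have hwcσ : ContinuousOn (w i) (Icc a (a+σ)) := hwcont i σ hσpos hσζ hσγ
            have haaσ : a ≤ a + σ := by linarith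
            obtain ⟨y₂, hy₂u, hy₂Y⟩ : ∃ y₂ : C(Icc a b, E),
                (∀ t : Icc a b, (t:ℝ) ≤ a + σ → y₂ t = sols i t) ∧
                (∀ t : Icc a b, ‖y₂ t - Y t‖ ≤ d i σ) := by
              refine ⟨Y + clampMap a b (a+σ) haaσ (w i) hwcσ, ?_, ?_⟩
              · intro t ht
                show Y t + w i (min (t:ℝ) (a+σ)) = sols i t
                rw [min_eq_left ht, hYy₀ t (by linarith)]
                simp [hwdef]
              · intro t
                show ‖Y t + w i (min (t:ℝ) (a+σ)) - Y t‖ ≤ d i σ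
                have hclampσ : ‖w i (min (t:ℝ) (a+σ))‖ ≤ d i σ :=
                  hle_d i σ hσpos hσζ hσγ _ ⟨le_min t.2.1 haaσ, min_le_right _ _⟩
                simpa using hclampσ
            have hdistY : dist y₂ Y < η := by
              rw [dist_eq_norm]
              have hn : ‖y₂ - Y‖ ≤ d i σ := by
                rw [ContinuousMap.norm_le _ (hd0 i σ)]
                intro t
                rw [ContinuousMap.sub_apply]
                exact hy₂Y t
              have h7 := hdσ.trans (min_le_left _ _)
              linarith
            have hτ : ∀ t : Icc a b, (t:ℝ) ≤ a + γ → ‖F y₂ (lams i) t - y₀ t‖ ≤ θ := by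
              intro t ht
              have he : F Y lam₀ t = y₀ t := hFY t (by linarith)
              rw [← he]
              have h4 : dist (F y₂ (lams i)) (F Y lam₀) < θ := by
                have hdp : dist (y₂, lams i) ((Y : C(Set.Icc a b, E)), lam₀) < η := by
                  rw [Prod.dist_eq]
                  exact max_lt hdistY h2
                exact hηp hdp
              calc ‖F y₂ (lams i) t - F Y lam₀ t‖
                  = dist (F y₂ (lams i) t) (F Y lam₀ t) := (dist_eq_norm _ _).symm
              _ ≤ dist (F y₂ (lams i)) (F Y lam₀) := ContinuousMap.dist_apply_le_dist t
              _ ≤ θ := h4.le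
            have hdσθ : d i σ ≤ θ := hdσ.trans (min_le_right _ _)
            have hboot := boot i σ (d i σ) (d i σ) θ y₂ hσ0 (hd0 i σ) (hd0 i σ) hθ0.le
              hdσθ hdσθ le_rfl (fun _ => hy₂u) hy₂Y hτ
              (fun t ht => hle_d i σ hσpos hσζ hσγ t ht)
              s hcover hsδσ hsγ hsζ
            exact hboot.trans hbound1
    obtain ⟨K, hK⟩ := exists_nat_ge (γ/δ)
    have hKδ : γ ≤ (K:ℝ)*δ := by
      rw [div_le_iff₀ hδ0] at hK
      linarith
    filter_upwards [Pmain K 1 one_pos] with i hPi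
    by_contra hcon
    push_neg at hcon
    have hζi0 : 0 < ζs i := (hsols i).1
    have hblow := (hsols i).2.2.2
    have hev : ∀ᶠ s in 𝓝[<] (ζs i),
        (R + 2 ≤ sSup ((fun t => ‖sols i t‖) '' Icc a (a+s))) ∧ s ∈ Ioo (0:ℝ) (ζs i) := by
      apply Eventually.and
      · exact hblow.eventually (eventually_ge_atTop (R+2))
      · exact eventually_of_mem (Ioo_mem_nhdsLT_of_mem ⟨hζi0, le_rfl⟩) (fun x hx => hx)
    obtain ⟨s, hsSup, hs0, hsζ⟩ := hev.exists
    have hsγ : s ≤ γ := by linarith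
    have hd1 : d i s ≤ 1 := hPi s hs0 (le_min (by linarith) hsγ) hsζ
    have hbnd : sSup ((fun t => ‖sols i t‖) '' Icc a (a+s)) ≤ R + 1 := by
      apply Real.sSup_le _ (by linarith)
      rintro x ⟨t, ht, rfl⟩
      have h5 : ‖w i t‖ ≤ d i s := hle_d i s hs0 hsζ hsγ t ht
      have htb : t ≤ b := by linarith [ht.2]
      have h6 : ‖y₀ t‖ ≤ R := by
        have h7 := hYy₀ ⟨t, ht.1, htb⟩ (by
          show t ≤ a + γ₀
          linarith [ht.2])
        rw [← h7]
        exact Y.norm_coe_le_norm _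
      have h8 : ‖sols i t‖ ≤ ‖w i t‖ + ‖y₀ t‖ := by
        have h9 : sols i t = w i t + y₀ t := by simp [hwdef]
        rw [h9]
        exact norm_add_le _ _
      linarith
    linarith
  -- Assemble the conclusion from keyB.
  set m := ⨅ i, ζs i with hm
  rcases le_or_gt ζ m with hle | hlt
  · exact ⟨by rw [min_eq_left hle]; exact hζpos, Or.inl (min_eq_left hle)⟩
  · have hm0 : (0:ℝ) ≤ m := le_ciInf fun i => (hsols i).1.le
    set γ' := (m + ζ)/2 with hγ'def
    have hγ'0 : 0 < γ' := by rw [hγ'def]; linarith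
    have hγ'ζ : γ' < ζ := by rw [hγ'def]; linarith
    have hmγ' : m < γ' := by rw [hγ'def]; linarith
    obtain ⟨N, hN⟩ := eventually_atTop.mp (keyB γ' hγ'0 hγ'ζ)
    obtain ⟨iw, hiw⟩ := exists_lt_of_ciInf_lt hmγ'
    have hiwN : iw < N := by
      by_contra h
      push_neg at h
      exact absurd (hN iw h) (by linarith)
    have hne : (Finset.range N).Nonempty := ⟨iw, Finset.mem_range.mpr hiwN⟩
    obtain ⟨i₀, hi₀mem, hi₀min⟩ := Finset.exists_min_image (Finset.range N) ζs hne
    have hi₀w : ζs i₀ ≤ ζs iw := hi₀min iw (Finset.mem_range.mpr hiwN)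
    have hmin : m = ζs i₀ := by
      apply le_antisymm (ciInf_le hbddS i₀)
      apply le_ciInf
      intro j
      by_cases hj : j < N
      · exact hi₀min j (Finset.mem_range.mpr hj)
      · push_neg at hj
        have := hN j hj
        linarith
    have hmζ : min ζ m = m := min_eq_right hlt.le
    refine ⟨?_, Or.inr ⟨i₀, by rw [hmζ, hmin]⟩⟩
    rw [hmζ, hmin]
    exact (hsols i₀).1
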